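/- arXiv:2302.11634 — 2 statements merged into one kernel-verified Lean document; each statement's English description precedes it below -/
import Mathlib

section
/- Consider an episodic MDP with horizon H, reward r : S×A → [0,1], transition kernel P, and a deterministic policy π. Suppose Q_h : S×A → [0,H] for h ∈ [H+1] with Q_{H+1} ≡ 0 satisfy, for all (s,a) and all h ∈ [H]: Q_h(s,a) ≤ r(s,a) + Σ_{s'} P(s'|s,a)·max_{a'} Q_{h+1}(s',a') + 2b_h(s,a), where π_h(s) ∈ argmax_a Q_h(s,a) and b_h ≥ 0. Let V_h(s) = max_a Q_h(s,a) and let V^π_h be the value function of π. Then for a trajectory (s_1,a_1,...,s_H,a_H) generated by π, V_1(s_1) − V^π_1(s_1) ≤ Σ_{h=1}^H (ξ_h + 2b_h(s_h, a_h)), where ξ_h = Σ_{s'} P(s'|s_h,a_h)(V_{h+1}(s') − V^π_{h+1}(s')) − (V_{h+1}(s_{h+1}) − V^π_{h+1}(s_{h+1})). -/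
open Finset

/-- Regret decomposition along a trajectory. For an episodic MDP
with horizon `H`, optimistic `Q`-functions satisfying
`Q_h ≤ r + P·max_{a'}Q_{h+1} + 2b_h`, greedy policy `π`, value functions
`V_h(s) = max_a Q_h(s,a)` and `V^π` satisfying the Bellman equation for `π`,
and a trajectory `(s_h, a_h)` with `a_h = π_h(s_h)`, we have
`V_1(s_1) − V^π_1(s_1) ≤ ∑_{h=1}^H (ξ_h + 2 b_h(s_h, a_h))`, where `ξ_h` is the
martingale correction term. -/
theorem regret_decomposition_trajectory
    {S A : Type*} [Fintype S] [Fintype A] [Nonempty A]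
    (H : ℕ) (r : S → A → ℝ) (P : S → A → S → ℝ)
    (hr : ∀ s a, r s a ∈ Set.Icc (0:ℝ) 1)
    (hP0 : ∀ s a s', 0 ≤ P s a s') (hP1 : ∀ s a, ∑ s', P s a s' = 1)
    (Q : ℕ → S → A → ℝ) (b : ℕ → S → A → ℝ) (π : ℕ → S → A)
    (Vπ : ℕ → S → ℝ) (st : ℕ → S)
    (hQrange : ∀ h ∈ Icc 1 H, ∀ s a, Q h s a ∈ Set.Icc (0:ℝ) (H:ℝ))
    (hQtop : ∀ s a, Q (H + 1) s a = 0)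
    (hb : ∀ h s a, 0 ≤ b h s a)
    (hQ : ∀ h ∈ Icc 1 H, ∀ s a,
      Q h s a ≤ r s a + (∑ s', P s a s' * (⨆ a', Q (h + 1) s' a')) + 2 * b h s a)
    (hgreedy : ∀ h s, Q h s (π h s) = ⨆ a, Q h s a)
    (hVπtop : ∀ s, Vπ (H + 1) s = 0)
    (hVπ : ∀ h ∈ Icc 1 H, ∀ s,
      Vπ h s = r s (π h s) + ∑ s', P s (π h s) s' * Vπ (h + 1) s') :
    (⨆ a, Q 1 (st 1) a) - Vπ 1 (st 1)
      ≤ ∑ h ∈ Icc 1 H,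
          ((∑ s', P (st h) (π h (st h)) s'
              * ((⨆ a', Q (h + 1) s' a') - Vπ (h + 1) s'))
            - ((⨆ a', Q (h + 1) (st (h + 1)) a') - Vπ (h + 1) (st (h + 1)))
           + 2 * b h (st h) (π h (st h))) := by
  suffices key : ∀ n, ∀ k, k + n = H + 1 → 1 ≤ k →
      (⨆ a, Q k (st k) a) - Vπ k (st k)
        ≤ ∑ h ∈ Icc k H,
            ((∑ s', P (st h) (π h (st h)) s'
                * ((⨆ a', Q (h + 1) s' a') - Vπ (h + 1) s'))
              - ((⨆ a', Q (h + 1) (st (h + 1)) a') - Vπ (h + 1) (st (h + 1)))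
             + 2 * b h (st h) (π h (st h))) by
    exact key H 1 (by omega) le_rfl
  intro n
  induction n with
  | zero =>
    intro k hk _
    have hkE : k = H + 1 := by omega
    subst hkE
    rw [Finset.Icc_eq_empty (by omega)]
    simp [hQtop, hVπtop, ciSup_const]
  | succ n ih =>
    intro k hk hk1
    have hkH : k ≤ H := by omega
    have hkmem : k ∈ Icc 1 H := Finset.mem_Icc.mpr ⟨hk1, hkH⟩
    have hsplit : Finset.Icc k H = insert k (Finset.Icc (k+1) H) := by
      rw [Finset.Icc_add_one_left_eq_Ioc, Finset.Ioc_insert_left hkH]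
    rw [hsplit, Finset.sum_insert (by simp)]
    have hQle := hQ k hkmem (st k) (π k (st k))
    have hVeq := hVπ k hkmem (st k)
    rw [← hgreedy k (st k), hVeq]
    have ihk := ih (k+1) (by omega) (by omega)
    have hdistrib : ∑ s', P (st k) (π k (st k)) s' * (⨆ a', Q (k+1) s' a')
        - ∑ s', P (st k) (π k (st k)) s' * Vπ (k+1) s'
        = ∑ s', P (st k) (π k (st k)) s' * ((⨆ a', Q (k+1) s' a') - Vπ (k+1) s') := by
      rw [← Finset.sum_sub_distrib]
      simp [mul_sub]
    linarith
end

section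
/- Let ν be a probability distribution on a set X, and let g : X → ℝ with |g(x)| ≤ B for all x. Let x_1,...,x_n be i.i.d. samples from ν with n ≥ 2L²·ln(2/δ'), and suppose E_ν[g²] ≥ (1/L)·sup_x g(x)² (surprise-bound condition). Then with probability at least 1 − δ', n·E_ν[g(x)²] ≤ 2·Σ_{k=1}^n g(x_k)². -/
open MeasureTheory ProbabilityTheory

section HoeffdingAux
open Real MeasureTheory

lemma hoeffding_key {p : ℝ} (hp0 : 0 ≤ p) (hp1 : p ≤ 1) (u : ℝ) :
    1 - p + p * exp u ≤ exp (p * u + u ^ 2 / 8) := by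
  have hD : ∀ v : ℝ, 0 < 1 - p + p * exp v := by
    intro v
    rcases lt_or_eq_of_le hp1 with h | h
    · nlinarith [exp_pos v, mul_nonneg hp0 (exp_pos v).le]
    · rw [h]; simpa using exp_pos v
  set D : ℝ → ℝ := fun v => 1 - p + p * exp v with hDdef
  have hDder : ∀ v, HasDerivAt D (p * exp v) v := fun v =>
    ((Real.hasDerivAt_exp v).const_mul p).const_add (1 - p)
  set G1 : ℝ → ℝ := fun v => p + v / 4 - p * exp v / D v with hG1def
  have hG1der : ∀ v, HasDerivAt G1
      (1 / 4 - (p * exp v * D v - p * exp v * (p * exp v)) / (D v) ^ 2) v := by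
    intro v
    have h1 : HasDerivAt (fun w : ℝ => p * exp w) (p * exp v) v :=
      (Real.hasDerivAt_exp v).const_mul p
    have h2 : HasDerivAt (fun w : ℝ => p * exp w / D w)
        ((p * exp v * D v - p * exp v * (p * exp v)) / (D v) ^ 2) v :=
      h1.div (hDder v) (hD v).ne'
    have h3 : HasDerivAt (fun w : ℝ => p + w / 4) (1 / 4) v := by
      simpa using ((hasDerivAt_id v).div_const 4).const_add p
    exact h3.sub h2
  have hG1derNN : ∀ v, 0 ≤ 1 / 4 - (p * exp v * D v - p * exp v * (p * exp v)) / (D v) ^ 2 := by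
    intro v
    have hDv := hD v
    rw [sub_nonneg, div_le_iff₀ (by positivity)]
    have hDeq : D v = 1 - p + p * exp v := rfl
    nlinarith [sq_nonneg ((1 - p) - p * exp v), mul_nonneg hp0 (exp_pos v).le]
  have hG1diff : Differentiable ℝ G1 := fun v => (hG1der v).differentiableAt
  have hG1mono : Monotone G1 := by
    refine monotone_of_deriv_nonneg hG1diff fun v => ?_
    rw [(hG1der v).deriv]; exact hG1derNN v
  have hG10 : G1 0 = 0 := by
    have h : D 0 = 1 := by simp [hDdef]
    simp [hG1def, h]
  set G : ℝ → ℝ := fun v => p * v + v ^ 2 / 8 - Real.log (D v) with hGdef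
  have hGder : ∀ v, HasDerivAt G (G1 v) v := by
    intro v
    have h1 : HasDerivAt (fun w : ℝ => p * w) p v := by
      simpa using (hasDerivAt_id v).const_mul p
    have h2 : HasDerivAt (fun w : ℝ => w ^ 2 / 8) (2 * v / 8) v := by
      simpa using (hasDerivAt_pow 2 v).div_const 8
    have h3 : HasDerivAt (fun w : ℝ => Real.log (D w)) (p * exp v / D v) v :=
      (hDder v).log (hD v).ne'
    have h4 := (h1.add h2).sub h3
    exact h4.congr_deriv (show _ = p + v / 4 - p * exp v / D v by ring)
  have hGdiff : Differentiable ℝ G := fun v => (hGder v).differentiableAt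
  have hG0 : G 0 = 0 := by
    have h : D 0 = 1 := by simp [hDdef]
    simp [hGdef, h]
  have hGnonneg : ∀ v, 0 ≤ G v := by
    intro v
    rcases le_total 0 v with hv | hv
    · have hmono : MonotoneOn G (Set.Ici (0:ℝ)) := by
        refine monotoneOn_of_deriv_nonneg (convex_Ici 0) hGdiff.continuous.continuousOn
          (fun w _ => (hGdiff w).differentiableWithinAt) fun w hw => ?_
        rw [(hGder w).deriv]
        have hw0 : (0:ℝ) ≤ w := by
          simp only [interior_Ici, Set.mem_Ioi] at hw; exact hw.le
        calc (0:ℝ) = G1 0 := hG10.symm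
          _ ≤ G1 w := hG1mono hw0
      have h := hmono Set.self_mem_Ici (Set.mem_Ici.2 hv) hv
      rwa [hG0] at h
    · have hanti : AntitoneOn G (Set.Iic (0:ℝ)) := by
        refine antitoneOn_of_deriv_nonpos (convex_Iic 0) hGdiff.continuous.continuousOn
          (fun w _ => (hGdiff w).differentiableWithinAt) fun w hw => ?_
        rw [(hGder w).deriv]
        have hw0 : w ≤ (0:ℝ) := by
          simp only [interior_Iic, Set.mem_Iio] at hw; exact hw.le
        calc G1 w ≤ G1 0 := hG1mono hw0
          _ = 0 := hG10
      have h := hanti (Set.mem_Iic.2 hv) Set.self_mem_Iic hv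
      rwa [hG0] at h
  have hlog : Real.log (D u) ≤ p * u + u ^ 2 / 8 := by
    have h := hGnonneg u
    simp only [hGdef] at h
    linarith
  calc 1 - p + p * exp u = D u := rfl
    _ = exp (Real.log (D u)) := (exp_log (hD u)).symm
    _ ≤ exp (p * u + u ^ 2 / 8) := exp_le_exp.2 hlog


lemma integral_exp_hoeffding {X : Type*} [MeasurableSpace X] (ν : Measure X)
    [IsProbabilityMeasure ν] (f : X → ℝ) (hf : Measurable f) {M : ℝ} (hM : 0 < M)
    (h0 : ∀ y, 0 ≤ f y) (hfM : ∀ y, f y ≤ M) (t : ℝ) :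
    ∫ y, exp (t * f y) ∂ν ≤ exp (t * (∫ y, f y ∂ν) + t ^ 2 * M ^ 2 / 8) := by
  have hfint : Integrable f ν := by
    refine (integrable_const M).mono' hf.aestronglyMeasurable ?_
    filter_upwards with y
    rw [Real.norm_eq_abs, abs_of_nonneg (h0 y)]; exact hfM y
  have hbd : ∀ y, exp (t * f y) ≤ 1 + f y * ((exp (t * M) - 1) / M) := by
    intro y
    have ha : (0:ℝ) ≤ 1 - f y / M := by
      rw [sub_nonneg]; exact div_le_one_of_le₀ (hfM y) hM.le
    have hb : (0:ℝ) ≤ f y / M := div_nonneg (h0 y) hM.le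
    have hab : (1 - f y / M) + f y / M = 1 := by ring
    have key : exp ((1 - f y / M) • (0:ℝ) + (f y / M) • (t * M)) ≤
        (1 - f y / M) * exp 0 + (f y / M) * exp (t * M) :=
      convexOn_exp.2 (Set.mem_univ (0:ℝ)) (Set.mem_univ (t * M)) ha hb hab
    simp only [smul_eq_mul, mul_zero, zero_add, exp_zero, mul_one] at key
    have harg : f y / M * (t * M) = t * f y := by field_simp
    rw [harg] at key
    calc exp (t * f y) ≤ 1 - f y / M + f y / M * exp (t * M) := key
      _ = 1 + f y * ((exp (t * M) - 1) / M) := by field_simp; ring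
  have hintL : Integrable (fun y => exp (t * f y)) ν := by
    refine (integrable_const (exp (|t| * M))).mono'
      ((hf.const_mul t).exp).aestronglyMeasurable ?_
    filter_upwards with y
    rw [Real.norm_eq_abs, abs_exp]
    refine exp_le_exp.2 ?_
    calc t * f y ≤ |t * f y| := le_abs_self _
      _ = |t| * |f y| := abs_mul _ _
      _ ≤ |t| * M := by
          refine mul_le_mul_of_nonneg_left ?_ (abs_nonneg t)
          rw [abs_of_nonneg (h0 y)]; exact hfM y
  have hintR : Integrable (fun y => 1 + f y * ((exp (t * M) - 1) / M)) ν :=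
    (integrable_const 1).add (hfint.mul_const _)
  set E := ∫ y, f y ∂ν with hE
  have hstep1 : ∫ y, exp (t * f y) ∂ν ≤ 1 + E * ((exp (t * M) - 1) / M) := by
    calc ∫ y, exp (t * f y) ∂ν ≤ ∫ y, (1 + f y * ((exp (t * M) - 1) / M)) ∂ν :=
          integral_mono hintL hintR hbd
      _ = 1 + E * ((exp (t * M) - 1) / M) := by
          rw [integral_add (integrable_const 1) (hfint.mul_const _),
            integral_const, integral_mul_const]
          simp [hE]
  have hE0 : 0 ≤ E := integral_nonneg h0
  have hEM : E ≤ M := by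
    calc E ≤ ∫ _, M ∂ν := integral_mono hfint (integrable_const M) hfM
      _ = M := by simp
  set p := E / M with hp
  have hkey := hoeffding_key (p := p) (by positivity)
    (div_le_one_of_le₀ hEM hM.le) (t * M)
  have heq1 : 1 + E * ((exp (t * M) - 1) / M) = 1 - p + p * exp (t * M) := by
    simp only [hp]; field_simp; ring
  have heq2 : p * (t * M) + (t * M) ^ 2 / 8 = t * E + t ^ 2 * M ^ 2 / 8 := by
    simp only [hp]; field_simp
  rw [heq1] at hstep1
  rw [heq2] at hkey
  exact hstep1.trans hkey
end HoeffdingAux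

/-- Fixed-pair bound of population squared error by empirical
squared error. `x_1,...,x_n` are i.i.d. with law `ν`, `|g| ≤ B`,
`n ≥ 2L²·ln(2/δ')`, and the surprise-bound condition
`g(x)² ≤ L·E_ν[g²]` for all `x` holds. Then with probability at least `1 − δ'`,
`n·E_ν[g²] ≤ 2·∑_k g(x_k)²`. -/
theorem population_le_empirical_fixed_pair
    {Ω X : Type*} [MeasurableSpace Ω] [MeasurableSpace X]
    (μ : Measure Ω) [IsProbabilityMeasure μ]
    (ν : Measure X) [IsProbabilityMeasure ν]
    (n : ℕ) (hn : 0 < n) (x : Fin n → Ω → X) (g : X → ℝ) (B L δ' : ℝ)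
    (hB : 0 < B) (hL : 1 ≤ L) (hδ' : δ' ∈ Set.Ioo (0:ℝ) 1)
    (hgmeas : Measurable g) (hgB : ∀ y, |g y| ≤ B)
    (hxmeas : ∀ k, Measurable (x k))
    (hindep : iIndepFun x μ)
    (hlaw : ∀ k, Measure.map (x k) μ = ν)
    (hnbig : 2 * L ^ 2 * Real.log (2 / δ') ≤ (n : ℝ))
    (hsurprise : ∀ y, (g y) ^ 2 ≤ L * ∫ y', (g y') ^ 2 ∂ν) :
    ENNReal.ofReal (1 - δ')
      ≤ μ {ω | (n : ℝ) * ∫ y, (g y) ^ 2 ∂ν ≤ 2 * ∑ k, (g (x k ω)) ^ 2} := by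
  classical
  obtain ⟨hδ0, hδ1⟩ := hδ'
  set E : ℝ := ∫ y, (g y) ^ 2 ∂ν with hEdef
  have hE0 : 0 ≤ E := integral_nonneg fun y => sq_nonneg _
  have hZnn : ∀ (ω : Ω), (0:ℝ) ≤ ∑ k, (g (x k ω)) ^ 2 :=
    fun ω => Finset.sum_nonneg fun k _ => sq_nonneg _
  rcases eq_or_lt_of_le hE0 with hEz | hEpos
  · have hset : {ω | (n : ℝ) * E ≤ 2 * ∑ k, (g (x k ω)) ^ 2} = Set.univ := by
      ext ω
      simp only [Set.mem_setOf_eq, Set.mem_univ, iff_true]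
      rw [← hEz, mul_zero]
      linarith [hZnn ω]
    rw [hset, measure_univ]
    exact ENNReal.ofReal_le_one.2 (by linarith)
  · set M : ℝ := L * E with hMdef
    have hLpos : (0:ℝ) < L := lt_of_lt_of_le one_pos hL
    have hMpos : 0 < M := mul_pos hLpos hEpos
    set t : ℝ := -(2 * E / M ^ 2) with htdef
    have ht : t ≤ 0 := by
      have : 0 ≤ 2 * E / M ^ 2 := by positivity
      simp only [htdef]; linarith
    set Z : Fin n → Ω → ℝ := fun k ω => (g (x k ω)) ^ 2 with hZdef
    have hZmeas : ∀ k, Measurable (Z k) := fun k => (hgmeas.comp (hxmeas k)).pow_const 2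
    have hZindep : iIndepFun Z μ :=
      hindep.comp (fun _ y => (g y) ^ 2) (fun _ => hgmeas.pow_const 2)
    have hZB : ∀ k ω, Z k ω ≤ B ^ 2 := by
      intro k ω
      have := hgB (x k ω)
      calc Z k ω = |g (x k ω)| ^ 2 := (sq_abs _).symm
        _ ≤ B ^ 2 := pow_le_pow_left₀ (abs_nonneg _) (hgB _) 2
    have hZnn' : ∀ k ω, 0 ≤ Z k ω := fun k ω => sq_nonneg _
    have h_int : ∀ k, Integrable (fun ω => Real.exp (t * Z k ω)) μ := by
      intro k
      refine (integrable_const (Real.exp (|t| * B ^ 2))).mono'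
        (((hZmeas k).const_mul t).exp).aestronglyMeasurable ?_
      filter_upwards with ω
      rw [Real.norm_eq_abs, Real.abs_exp]
      refine Real.exp_le_exp.2 ?_
      calc t * Z k ω ≤ |t * Z k ω| := le_abs_self _
        _ = |t| * |Z k ω| := abs_mul _ _
        _ ≤ |t| * B ^ 2 := by
            refine mul_le_mul_of_nonneg_left ?_ (abs_nonneg t)
            rw [abs_of_nonneg (hZnn' k ω)]; exact hZB k ω
    -- per-coordinate mgf bound
    have hmgf_le : ∀ k, mgf (Z k) μ t ≤ Real.exp (t * E + t ^ 2 * M ^ 2 / 8) := by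
      intro k
      have hmap : mgf (Z k) μ t = ∫ y, Real.exp (t * (g y) ^ 2) ∂ν := by
        rw [mgf, ← hlaw k, integral_map (hxmeas k).aemeasurable
          ((hgmeas.pow_const 2).const_mul t).exp.aestronglyMeasurable]
      rw [hmap]
      exact integral_exp_hoeffding ν (fun y => (g y) ^ 2) (hgmeas.pow_const 2) hMpos
        (fun y => sq_nonneg _) (fun y => hsurprise y) t
    -- Chernoff
    have hintsum : Integrable (fun ω => Real.exp (t * (∑ i, Z i) ω)) μ :=
      hZindep.integrable_exp_mul_sum hZmeas (fun i _ => h_int i)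
    have hchern := measure_le_le_exp_mul_mgf (X := ∑ i, Z i) ((n : ℝ) * E / 2) ht hintsum
    have hprod : mgf (∑ i, Z i) μ t ≤ Real.exp ((n:ℝ) * (t * E + t ^ 2 * M ^ 2 / 8)) := by
      rw [hZindep.mgf_sum hZmeas Finset.univ]
      calc ∏ i, mgf (Z i) μ t ≤ ∏ _i : Fin n, Real.exp (t * E + t ^ 2 * M ^ 2 / 8) :=
            Finset.prod_le_prod (fun i _ => mgf_nonneg) (fun i _ => hmgf_le i)
        _ = Real.exp ((n:ℝ) * (t * E + t ^ 2 * M ^ 2 / 8)) := by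
            rw [Finset.prod_const, Real.exp_nat_mul, Finset.card_univ, Fintype.card_fin]
    have hEne : E ≠ 0 := ne_of_gt hEpos
    have hLne : L ≠ 0 := ne_of_gt hLpos
    have hexpo : -t * ((n : ℝ) * E / 2) + (n:ℝ) * (t * E + t ^ 2 * M ^ 2 / 8)
        = -((n:ℝ) / (2 * L ^ 2)) := by
      simp only [htdef, hMdef]
      field_simp
      ring
    have hbad : (μ {ω | (∑ i, Z i) ω ≤ (n : ℝ) * E / 2}).toReal ≤ δ' / 2 := by
      have h1 : (μ {ω | (∑ i, Z i) ω ≤ (n : ℝ) * E / 2}).toReal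
          ≤ Real.exp (-((n:ℝ) / (2 * L ^ 2))) := by
        refine hchern.trans ?_
        calc Real.exp (-t * ((n:ℝ) * E / 2)) * mgf (∑ i, Z i) μ t
            ≤ Real.exp (-t * ((n:ℝ) * E / 2)) * Real.exp ((n:ℝ) * (t * E + t ^ 2 * M ^ 2 / 8)) :=
              mul_le_mul_of_nonneg_left hprod (Real.exp_pos _).le
          _ = Real.exp (-t * ((n : ℝ) * E / 2) + (n:ℝ) * (t * E + t ^ 2 * M ^ 2 / 8)) :=
              (Real.exp_add _ _).symm
          _ = Real.exp (-((n:ℝ) / (2 * L ^ 2))) := by rw [hexpo]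
      refine h1.trans ?_
      have h2 : Real.log (2 / δ') ≤ (n:ℝ) / (2 * L ^ 2) := by
        rw [le_div_iff₀ (by positivity)]
        linarith [hnbig]
      calc Real.exp (-((n:ℝ) / (2 * L ^ 2))) ≤ Real.exp (-Real.log (2 / δ')) := by
            exact Real.exp_le_exp.2 (by linarith)
        _ = δ' / 2 := by
            rw [Real.exp_neg, Real.exp_log (by positivity), inv_div]
    -- endgame
    have hSmeas : Measurable fun ω => ∑ k, (g (x k ω)) ^ 2 :=
      Finset.measurable_sum Finset.univ (fun i _ => hZmeas i)
    have hgood : MeasurableSet {ω | (n : ℝ) * E ≤ 2 * ∑ k, (g (x k ω)) ^ 2} :=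
      measurableSet_le measurable_const (hSmeas.const_mul 2)
    have hsubset : {ω | (n : ℝ) * E ≤ 2 * ∑ k, (g (x k ω)) ^ 2}ᶜ
        ⊆ {ω | (∑ i, Z i) ω ≤ (n : ℝ) * E / 2} := by
      intro ω hω
      simp only [Set.mem_compl_iff, Set.mem_setOf_eq, not_le] at hω
      simp only [Set.mem_setOf_eq, Finset.sum_apply]
      linarith
    have hcompl : μ {ω | (n : ℝ) * E ≤ 2 * ∑ k, (g (x k ω)) ^ 2}ᶜ ≤ ENNReal.ofReal δ' := by
      refine (measure_mono hsubset).trans ?_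
      rw [ENNReal.le_ofReal_iff_toReal_le (measure_ne_top μ _) hδ0.le]
      linarith [hbad]
    have hsum1 : μ {ω | (n : ℝ) * E ≤ 2 * ∑ k, (g (x k ω)) ^ 2}
        + μ {ω | (n : ℝ) * E ≤ 2 * ∑ k, (g (x k ω)) ^ 2}ᶜ = 1 :=
      (measure_add_measure_compl hgood).trans measure_univ
    have hfinal : (1:ENNReal) ≤ μ {ω | (n : ℝ) * E ≤ 2 * ∑ k, (g (x k ω)) ^ 2}
        + ENNReal.ofReal δ' := by
      rw [← hsum1]
      exact add_le_add_right hcompl _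
    have hstep : ENNReal.ofReal (1 - δ') + ENNReal.ofReal δ'
        ≤ μ {ω | (n : ℝ) * E ≤ 2 * ∑ k, (g (x k ω)) ^ 2} + ENNReal.ofReal δ' := by
      rw [← ENNReal.ofReal_add (by linarith) hδ0.le]
      norm_num
      exact hfinal
    exact (ENNReal.add_le_add_iff_right ENNReal.ofReal_ne_top).1 hstep
end
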